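/- arXiv:2102.09769 — 2 statements merged into one kernel-verified Lean document; each statement's English description precedes it below -/
import Mathlib

section
/- Let X = (x^(1),…,x^(N)) ∈ ℝ^{d×N} with labels y ∈ ℝ^N, and let u₊, u₋, v₊, v₋ : [0,∞) → ℝ^d be differentiable curves solving the gradient flow of the diagonal linear network loss, with unbiased initialization u₊(0) = u₋(0) and v₊(0) = v₋(0), and with u_{+,i}(0)² + v_{+,i}(0)² > 0 for every coordinate i. Set w̃(t) = u₊(t)∘v₊(t) − u₋(t)∘v₋(t) and k_i = 4(u_{+,i}(0)² + v_{+,i}(0)²)². If w̃(t) converges as t → ∞ to a limit w̃∞ satisfying Xᵀw̃∞ = y, then w̃∞ is the unique minimizer of Q(w) = Σ_{i=1}^d q_{k_i}(w_i) over the set {w ∈ ℝ^d : Xᵀw = y}. -/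
/-!
Coordinatewise, the flow reads `u̇₊ = g v₊`, `v̇₊ = g u₊`, `u̇₋ = -g v₋`, `v̇₋ = -g u₋` with
`g = -∇L(w̃) = (1/N) X r` in the range of `X`. For `W = u₊v₊ - u₋v₋` and
`H = u₊² + v₊² + u₋² + v₋²` this gives `Ẇ = g H` and `Ḣ = 4 g W`, so `H² - 4W²` is conserved;
under unbiased initialization `W(0) = 0` and the constant is `k`. Since
`q_k''(x) = 1 / √(k + 4x²) = 1 / H`, the mirror variable `q_k'(W)` moves with velocity `g`.
Hence `∇Q(w̃(t))`, which vanishes at `t = 0`, stays orthogonal to `ker Xᵀ`, and so does its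
limit `∇Q(w̃∞)`. For an interpolator `w` we have `w - w̃∞ ∈ ker Xᵀ`, and strict convexity of `Q`
gives `Q(w̃∞) < Q(w)`.
-/

/-- The square loss of the two-layer diagonal linear network with untied weights:
`L(u₊,u₋,v₊,v₋) = (1/(2N)) Σₙ (yⁿ − (u₊∘v₊ − u₋∘v₋)ᵀxⁿ)²`. -/
noncomputable def diagLoss {d N : ℕ} (X : Fin N → EuclideanSpace ℝ (Fin d))
    (y : Fin N → ℝ) (uP uM vP vM : EuclideanSpace ℝ (Fin d)) : ℝ :=
  1 / (2 * N) * ∑ n, (y n - ∑ i, (uP i * vP i - uM i * vM i) * X n i) ^ 2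

/-- The implicit regularizer `q_k` of the diagonal linear network. -/
noncomputable def qk (k x : ℝ) : ℝ :=
  Real.sqrt k / 4 * (1 - Real.sqrt (1 + 4 * x ^ 2 / k)
    + 2 * x / Real.sqrt k * Real.arsinh (2 * x / Real.sqrt k))

open Real Finset Set

lemma hasDerivAt_mul_arsinh_sub_sqrt (s : ℝ) :
    HasDerivAt (fun s => s * arsinh s - √(1 + s ^ 2)) (arsinh s) s := by
  have hpos : 0 < 1 + s ^ 2 := by positivity
  have hsqrt := (hasDerivAt_sqrt hpos.ne').comp s (((hasDerivAt_id s).pow 2).const_add 1)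
  refine (((hasDerivAt_id s).mul (hasDerivAt_arsinh s)).sub hsqrt).congr_deriv ?_
  field_simp
  ring

lemma qk_eq {k : ℝ} (hk : 0 ≤ k) (x : ℝ) :
    qk k x = √k / 4 * (1 + (2 * x / √k * arsinh (2 * x / √k) - √(1 + (2 * x / √k) ^ 2))) := by
  rw [qk, div_pow, mul_pow, sq_sqrt hk]
  ring_nf

noncomputable def qkDeriv (k x : ℝ) : ℝ := arsinh (2 * x / √k) / 2

lemma hasDerivAt_qk {k : ℝ} (hk : 0 < k) (x : ℝ) : HasDerivAt (qk k) (qkDeriv k x) x := by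
  have hlin : HasDerivAt (fun x => 2 * x / √k) (2 / √k) x := by
    simpa using ((hasDerivAt_id x).const_mul 2).div_const √k
  have := (((hasDerivAt_mul_arsinh_sub_sqrt _).comp x hlin).const_add 1).const_mul (√k / 4)
  rw [funext (qk_eq hk.le)]
  refine this.congr_deriv ?_
  have hsk : √k ≠ 0 := (sqrt_pos.2 hk).ne'
  rw [qkDeriv]
  field_simp
  ring

lemma hasDerivAt_qkDeriv {k : ℝ} (hk : 0 < k) (x : ℝ) :
    HasDerivAt (qkDeriv k) (√(k + 4 * x ^ 2))⁻¹ x := by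
  have hlin : HasDerivAt (fun x => 2 * x / √k) (2 / √k) x := by
    simpa using ((hasDerivAt_id x).const_mul 2).div_const √k
  refine (((hasDerivAt_arsinh _).comp x hlin).div_const 2).congr_deriv ?_
  have hsk : 0 < √k := sqrt_pos.2 hk
  have : √(k + 4 * x ^ 2) = √k * √(1 + (2 * x / √k) ^ 2) := by
    rw [← sqrt_mul hk.le, div_pow, mul_pow, sq_sqrt hk.le]
    congr 1
    field_simp
    ring
  rw [this]
  field_simp

lemma strictConvexOn_qk {k : ℝ} (hk : 0 < k) : StrictConvexOn ℝ univ (qk k) := by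
  refine StrictMono.strictConvexOn_univ_of_deriv
    (continuous_iff_continuousAt.2 fun x => (hasDerivAt_qk hk x).continuousAt) ?_
  rw [funext fun x => (hasDerivAt_qk hk x).deriv]
  intro a b hab
  have hsk := sqrt_pos.2 hk
  unfold qkDeriv
  gcongr
  exact arsinh_strictMono (by gcongr)

lemma StrictConvexOn.add_mul_sub_lt_of_hasDerivAt {f : ℝ → ℝ} {f' a b : ℝ}
    (hf : StrictConvexOn ℝ univ f) (hfa : HasDerivAt f f' a) (hab : a ≠ b) :
    f a + f' * (b - a) < f b := by
  rcases hab.lt_or_gt with h | h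
  · have := hf.lt_slope_of_hasDerivAt trivial trivial h hfa
    rw [slope_def_field, lt_div_iff₀ (sub_pos.2 h)] at this
    linarith
  · have := hf.slope_lt_of_hasDerivAt trivial trivial h hfa
    rw [slope_def_field, div_lt_iff₀ (sub_pos.2 h)] at this
    linarith

lemma sum_lt_sum_of_strictConvexOn {ι : Type*} [Fintype ι] {f : ι → ℝ → ℝ} {f' a b : ι → ℝ}
    (hf : ∀ i, StrictConvexOn ℝ univ (f i)) (hfa : ∀ i, HasDerivAt (f i) (f' i) (a i))
    (horth : ∑ i, f' i * (b i - a i) = 0) (hab : a ≠ b) :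
    ∑ i, f i (a i) < ∑ i, f i (b i) := by
  obtain ⟨j, hj⟩ := Function.ne_iff.1 hab
  have htangent : ∀ i, f i (a i) + f' i * (b i - a i) ≤ f i (b i) := fun i => by
    rcases eq_or_ne (a i) (b i) with h | h
    · simp [h]
    · exact ((hf i).add_mul_sub_lt_of_hasDerivAt (hfa i) h).le
  calc ∑ i, f i (a i) = ∑ i, (f i (a i) + f' i * (b i - a i)) := by
        rw [sum_add_distrib, horth, add_zero]
    _ < ∑ i, f i (b i) := sum_lt_sum (fun i _ => htangent i)
        ⟨j, mem_univ j, (hf j).add_mul_sub_lt_of_hasDerivAt (hfa j) hj⟩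

lemma eq_of_hasDerivAt_zero_of_nonneg {f : ℝ → ℝ} (hf : ∀ t, 0 ≤ t → HasDerivAt f 0 t)
    {t : ℝ} (ht : 0 ≤ t) : f t = f 0 :=
  constant_of_has_deriv_right_zero
    (fun x hx => (hf x hx.1).continuousAt.continuousWithinAt)
    (fun x hx => (hf x hx.1).hasDerivWithinAt) t ⟨ht, le_rfl⟩

def SolvesDiagNetODE (p q r s g : ℝ → ℝ) : Prop :=
  ∀ t, 0 ≤ t → HasDerivAt p (g t * q t) t ∧ HasDerivAt q (g t * p t) t ∧
    HasDerivAt r (-(g t * s t)) t ∧ HasDerivAt s (-(g t * r t)) t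

namespace SolvesDiagNetODE

variable {p q r s g : ℝ → ℝ} {t : ℝ}

lemma hasDerivAt_sub_mul (h : SolvesDiagNetODE p q r s g) (ht : 0 ≤ t) :
    HasDerivAt (fun t => p t * q t - r t * s t)
      (g t * (p t ^ 2 + q t ^ 2 + r t ^ 2 + s t ^ 2)) t := by
  obtain ⟨hp, hq, hr, hs⟩ := h t ht
  exact ((hp.mul hq).sub (hr.mul hs)).congr_deriv (by ring)

lemma hasDerivAt_sum_sq (h : SolvesDiagNetODE p q r s g) (ht : 0 ≤ t) :
    HasDerivAt (fun t => p t ^ 2 + q t ^ 2 + r t ^ 2 + s t ^ 2)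
      (4 * g t * (p t * q t - r t * s t)) t := by
  obtain ⟨hp, hq, hr, hs⟩ := h t ht
  exact ((((hp.pow 2).add (hq.pow 2)).add (hr.pow 2)).add (hs.pow 2)).congr_deriv (by ring)

lemma sq_sum_sq_sub_sq_eq (h : SolvesDiagNetODE p q r s g) (ht : 0 ≤ t) :
    (p t ^ 2 + q t ^ 2 + r t ^ 2 + s t ^ 2) ^ 2 - 4 * (p t * q t - r t * s t) ^ 2 =
      (p 0 ^ 2 + q 0 ^ 2 + r 0 ^ 2 + s 0 ^ 2) ^ 2 - 4 * (p 0 * q 0 - r 0 * s 0) ^ 2 :=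
  eq_of_hasDerivAt_zero_of_nonneg (f := fun t => (p t ^ 2 + q t ^ 2 + r t ^ 2 + s t ^ 2) ^ 2
      - 4 * (p t * q t - r t * s t) ^ 2)
    (fun t ht => (((h.hasDerivAt_sum_sq ht).pow 2).sub
      (((h.hasDerivAt_sub_mul ht).pow 2).const_mul 4)).congr_deriv (by ring)) ht

lemma hasDerivAt_qkDeriv_sub_mul (h : SolvesDiagNetODE p q r s g) {k : ℝ} (hk : 0 < k)
    (hk0 : (p 0 ^ 2 + q 0 ^ 2 + r 0 ^ 2 + s 0 ^ 2) ^ 2 - 4 * (p 0 * q 0 - r 0 * s 0) ^ 2 = k)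
    (ht : 0 ≤ t) :
    HasDerivAt (fun t => qkDeriv k (p t * q t - r t * s t)) (g t) t := by
  -- conservation of `H² - 4W²` makes `H = √(k + 4W²) = 1 / q_k''(W)`
  have hH : √(k + 4 * (p t * q t - r t * s t) ^ 2) = p t ^ 2 + q t ^ 2 + r t ^ 2 + s t ^ 2 := by
    rw [← hk0, ← h.sq_sum_sq_sub_sq_eq ht, sub_add_cancel, sqrt_sq (by positivity)]
  have hHpos : 0 < p t ^ 2 + q t ^ 2 + r t ^ 2 + s t ^ 2 := by
    rw [← hH]
    positivity
  refine ((hasDerivAt_qkDeriv hk _).comp t (h.hasDerivAt_sub_mul ht)).congr_deriv ?_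
  rw [hH]
  field_simp

end SolvesDiagNetODE

lemma hasGradientAt_leastSquares {ι E : Type*} [Fintype ι] [NormedAddCommGroup E]
    [InnerProductSpace ℝ E] [CompleteSpace E] (z : ι → E) (c : ι → ℝ) (κ : ℝ) (a : E) :
    HasGradientAt (fun u => κ * ∑ n, (c n - inner ℝ (z n) u) ^ 2)
      (-(2 * κ) • ∑ n, (c n - inner ℝ (z n) a) • z n) a := by
  rw [hasGradientAt_iff_hasFDerivAt]
  have hterm := fun n => (((innerSL ℝ (z n)).hasFDerivAt (x := a)).const_sub (c n)).pow 2
  refine ((HasFDerivAt.fun_sum fun n _ => hterm n).const_mul κ).congr_fderiv ?_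
  ext h
  simp [mul_sum, real_inner_comm]
  exact sum_congr rfl fun n _ => by ring

lemma HasDerivAt.euclideanSpace_apply {ι : Type*} [Fintype ι]
    {f : ℝ → EuclideanSpace ℝ ι} {f' : EuclideanSpace ℝ ι} {t : ℝ} (hf : HasDerivAt f f' t)
    (i : ι) :
    HasDerivAt (fun s => f s i) (f' i) t :=
  (EuclideanSpace.proj (𝕜 := ℝ) i).hasFDerivAt.comp_hasDerivAt t hf

section DiagonalNetwork

variable {d N : ℕ} (X : Fin N → EuclideanSpace ℝ (Fin d)) (y : Fin N → ℝ)

/-- The `i`-th coordinate of `-∇L(w̃) = (1/N) X r`, where `r = y - Xᵀw̃` is the residual. -/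
noncomputable def residualCorr (uP uM vP vM : EuclideanSpace ℝ (Fin d)) (i : Fin d) : ℝ :=
  (N : ℝ)⁻¹ * ∑ n, (y n - ∑ j, (uP j * vP j - uM j * vM j) * X n j) * X n i

lemma diagLoss_swap (uP uM vP vM : EuclideanSpace ℝ (Fin d)) :
    diagLoss X y uP uM vP vM = diagLoss X y vP vM uP uM := by
  simp only [diagLoss, mul_comm (uP _) (vP _), mul_comm (uM _) (vM _)]

lemma diagLoss_neg_swap (uP uM vP vM : EuclideanSpace ℝ (Fin d)) :
    diagLoss X y uP uM vP vM = diagLoss X (-y) uM uP vM vP := by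
  simp only [diagLoss, Pi.neg_apply]
  congr 1
  refine sum_congr rfl fun n _ => ?_
  rw [← neg_sq]
  simp only [sub_mul, sum_sub_distrib]
  ring

lemma residualCorr_swap (uP uM vP vM : EuclideanSpace ℝ (Fin d)) :
    residualCorr X y vP vM uP uM = residualCorr X y uP uM vP vM := by
  ext i
  simp only [residualCorr, mul_comm (uP _) (vP _), mul_comm (uM _) (vM _)]

lemma residualCorr_neg_swap (uP uM vP vM : EuclideanSpace ℝ (Fin d)) :
    residualCorr X (-y) uM uP vM vP = -residualCorr X y uP uM vP vM := by
  ext i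
  simp only [residualCorr, Pi.neg_apply]
  rw [← mul_neg, ← sum_neg_distrib]
  congr 1
  refine sum_congr rfl fun n _ => ?_
  simp only [sub_mul, sum_sub_distrib]
  ring

lemma hasGradientAt_diagLoss_uP (uP uM vP vM : EuclideanSpace ℝ (Fin d)) :
    HasGradientAt (fun u => diagLoss X y u uM vP vM)
      (-WithLp.toLp 2 fun i => residualCorr X y uP uM vP vM i * vP i) uP := by
  have hres : ∀ u : EuclideanSpace ℝ (Fin d), ∀ n,
      y n - ∑ j, (u j * vP j - uM j * vM j) * X n j
        = y n + ∑ j, uM j * vM j * X n j - inner ℝ (WithLp.toLp 2 fun j => vP j * X n j) u := by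
    intro u n
    simp only [PiLp.inner_apply, RCLike.inner_apply, conj_trivial, sub_mul, sum_sub_distrib,
      mul_assoc]
    ring
  convert hasGradientAt_leastSquares (fun n => WithLp.toLp 2 fun j => vP j * X n j)
    (fun n => y n + ∑ j, uM j * vM j * X n j) (1 / (2 * N)) uP using 1
  · simp only [diagLoss, hres]
  · ext i
    simp [residualCorr, hres, mul_sum, sum_mul]
    exact sum_congr rfl fun n _ => by ring

lemma gradient_diagLoss_uP (uP uM vP vM : EuclideanSpace ℝ (Fin d)) :
    gradient (fun u => diagLoss X y u uM vP vM) uP =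
      -WithLp.toLp 2 fun i => residualCorr X y uP uM vP vM i * vP i :=
  (hasGradientAt_diagLoss_uP X y uP uM vP vM).gradient

lemma gradient_diagLoss_uM (uP uM vP vM : EuclideanSpace ℝ (Fin d)) :
    gradient (fun u => diagLoss X y uP u vP vM) uM =
      WithLp.toLp 2 fun i => residualCorr X y uP uM vP vM i * vM i := by
  simp only [diagLoss_neg_swap X y uP, gradient_diagLoss_uP, residualCorr_neg_swap]
  ext i
  simp

lemma gradient_diagLoss_vP (uP uM vP vM : EuclideanSpace ℝ (Fin d)) :
    gradient (fun v => diagLoss X y uP uM v vM) vP =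
      -WithLp.toLp 2 fun i => residualCorr X y uP uM vP vM i * uP i := by
  simp only [diagLoss_swap X y uP, gradient_diagLoss_uP, residualCorr_swap]

lemma gradient_diagLoss_vM (uP uM vP vM : EuclideanSpace ℝ (Fin d)) :
    gradient (fun v => diagLoss X y uP uM vP v) vM =
      WithLp.toLp 2 fun i => residualCorr X y uP uM vP vM i * uM i := by
  simp only [diagLoss_swap X y uP, gradient_diagLoss_uM, residualCorr_swap]

def IsDiagGradientFlow (uP uM vP vM : ℝ → EuclideanSpace ℝ (Fin d)) : Prop :=
  ∀ t, 0 ≤ t →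
    HasDerivAt uP (-gradient (fun u => diagLoss X y u (uM t) (vP t) (vM t)) (uP t)) t ∧
    HasDerivAt uM (-gradient (fun u => diagLoss X y (uP t) u (vP t) (vM t)) (uM t)) t ∧
    HasDerivAt vP (-gradient (fun v => diagLoss X y (uP t) (uM t) v (vM t)) (vP t)) t ∧
    HasDerivAt vM (-gradient (fun v => diagLoss X y (uP t) (uM t) (vP t) v) (vM t)) t

variable {X y} {uP uM vP vM : ℝ → EuclideanSpace ℝ (Fin d)}

lemma IsDiagGradientFlow.solvesDiagNetODE (h : IsDiagGradientFlow X y uP uM vP vM) (i : Fin d) :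
    SolvesDiagNetODE (uP · i) (vP · i) (uM · i) (vM · i)
      (fun t => residualCorr X y (uP t) (uM t) (vP t) (vM t) i) := by
  intro t ht
  obtain ⟨hu, hu', hv, hv'⟩ := h t ht
  rw [gradient_diagLoss_uP] at hu
  rw [gradient_diagLoss_uM] at hu'
  rw [gradient_diagLoss_vP] at hv
  rw [gradient_diagLoss_vM] at hv'
  exact ⟨by simpa using hu.euclideanSpace_apply i, by simpa using hv.euclideanSpace_apply i,
    by simpa using hu'.euclideanSpace_apply i, by simpa using hv'.euclideanSpace_apply i⟩

lemma sum_residualCorr_mul_eq_zero (uP uM vP vM : EuclideanSpace ℝ (Fin d)) {δ : Fin d → ℝ}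
    (hδ : ∀ n, ∑ i, X n i * δ i = 0) :
    ∑ i, residualCorr X y uP uM vP vM i * δ i = 0 := by
  simp only [residualCorr, mul_assoc, ← mul_sum, sum_mul]
  rw [sum_comm]
  simp [← mul_sum, hδ]

lemma IsDiagGradientFlow.sum_qkDeriv_mul_eq_zero (h : IsDiagGradientFlow X y uP uM vP vM)
    (hu0 : uP 0 = uM 0) (hv0 : vP 0 = vM 0) (hpos : ∀ i, 0 < uP 0 i ^ 2 + vP 0 i ^ 2)
    {δ : Fin d → ℝ} (hδ : ∀ n, ∑ i, X n i * δ i = 0) {t : ℝ} (ht : 0 ≤ t) :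
    ∑ i, qkDeriv (4 * (uP 0 i ^ 2 + vP 0 i ^ 2) ^ 2) (uP t i * vP t i - uM t i * vM t i) * δ i
      = 0 := by
  have hk : ∀ i, 0 < 4 * (uP 0 i ^ 2 + vP 0 i ^ 2) ^ 2 := fun i => by
    have := hpos i
    positivity
  have hk0 : ∀ i, (uP 0 i ^ 2 + vP 0 i ^ 2 + uM 0 i ^ 2 + vM 0 i ^ 2) ^ 2
      - 4 * (uP 0 i * vP 0 i - uM 0 i * vM 0 i) ^ 2 = 4 * (uP 0 i ^ 2 + vP 0 i ^ 2) ^ 2 :=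
    fun i => by rw [hu0, hv0]; ring
  refine (eq_of_hasDerivAt_zero_of_nonneg (f := fun t => ∑ i,
    qkDeriv (4 * (uP 0 i ^ 2 + vP 0 i ^ 2) ^ 2) (uP t i * vP t i - uM t i * vM t i) * δ i)
    (fun t ht => ?_) ht).trans ?_
  · refine (HasDerivAt.fun_sum fun i _ =>
      (((h.solvesDiagNetODE i).hasDerivAt_qkDeriv_sub_mul (hk i) (hk0 i) ht).mul_const
        (δ i))).congr_deriv ?_
    exact sum_residualCorr_mul_eq_zero _ _ _ _ hδ
  · simp [hu0, hv0, qkDeriv]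

end DiagonalNetwork

/-- for gradient flow on a diagonal linear network with unbiased
initialization, if the end-to-end predictor `w̃(t) = u₊∘v₊ − u₋∘v₋` converges to an
interpolator `w̃∞`, then `w̃∞` is the unique minimizer of
`Q(w) = Σᵢ q_{kᵢ}(wᵢ)`, `kᵢ = 4(u₊ᵢ(0)² + v₊ᵢ(0)²)²`, over `{w : Xᵀw = y}`. -/
theorem stmt_0 {d N : ℕ} (X : Fin N → EuclideanSpace ℝ (Fin d)) (y : Fin N → ℝ)
    (uP uM vP vM : ℝ → EuclideanSpace ℝ (Fin d))
    (hflow : ∀ t, 0 ≤ t →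
      HasDerivAt uP (-gradient (fun u => diagLoss X y u (uM t) (vP t) (vM t)) (uP t)) t ∧
      HasDerivAt uM (-gradient (fun u => diagLoss X y (uP t) u (vP t) (vM t)) (uM t)) t ∧
      HasDerivAt vP (-gradient (fun v => diagLoss X y (uP t) (uM t) v (vM t)) (vP t)) t ∧
      HasDerivAt vM (-gradient (fun v => diagLoss X y (uP t) (uM t) (vP t) v) (vM t)) t)
    (hu0 : uP 0 = uM 0) (hv0 : vP 0 = vM 0)
    (hpos : ∀ i : Fin d, 0 < uP 0 i ^ 2 + vP 0 i ^ 2)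
    (wInf : EuclideanSpace ℝ (Fin d))
    (hconv : Filter.Tendsto
      (fun t => (WithLp.toLp 2 (fun i => uP t i * vP t i - uM t i * vM t i) : EuclideanSpace ℝ (Fin d)))
      Filter.atTop (nhds wInf))
    (hfit : ∀ n, ∑ i, X n i * wInf i = y n) :
    ∀ w : EuclideanSpace ℝ (Fin d),
      (∀ n, ∑ i, X n i * w i = y n) → w ≠ wInf →
      ∑ i, qk (4 * (uP 0 i ^ 2 + vP 0 i ^ 2) ^ 2) (wInf i) <
        ∑ i, qk (4 * (uP 0 i ^ 2 + vP 0 i ^ 2) ^ 2) (w i) := by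
  intro w hw hne
  have hk : ∀ i, 0 < 4 * (uP 0 i ^ 2 + vP 0 i ^ 2) ^ 2 := fun i => by
    have := hpos i
    positivity
  have hδ : ∀ n, ∑ i, X n i * (w i - wInf i) = 0 := fun n => by
    simp only [mul_sub, sum_sub_distrib, hw, hfit, sub_self]
  have hlim : Filter.Tendsto (fun t => ∑ i, qkDeriv (4 * (uP 0 i ^ 2 + vP 0 i ^ 2) ^ 2)
      (uP t i * vP t i - uM t i * vM t i) * (w i - wInf i)) Filter.atTop
      (nhds (∑ i, qkDeriv (4 * (uP 0 i ^ 2 + vP 0 i ^ 2) ^ 2) (wInf i) * (w i - wInf i))) := by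
    refine tendsto_finsetSum _ fun i _ => Filter.Tendsto.mul_const _ ?_
    exact (hasDerivAt_qkDeriv (hk i) _).continuousAt.tendsto.comp
      (((EuclideanSpace.proj (𝕜 := ℝ) i).continuous.tendsto wInf).comp hconv)
  have horth : ∑ i, qkDeriv (4 * (uP 0 i ^ 2 + vP 0 i ^ 2) ^ 2) (wInf i) * (w i - wInf i) = 0 :=
    tendsto_nhds_unique hlim (tendsto_const_nhds.congr' (Filter.eventually_atTop.2
      ⟨0, fun t ht => (IsDiagGradientFlow.sum_qkDeriv_mul_eq_zero hflow hu0 hv0 hpos hδ ht).symm⟩))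
  exact sum_lt_sum_of_strictConvexOn (fun i => strictConvexOn_qk (hk i))
    (fun i => hasDerivAt_qk (hk i) (wInf i)) horth
    (fun h => hne (WithLp.ofLp_injective 2 h).symm)
end

section
/- Let d ≥ 2 and define H : ℝ^d∖{0} → ℝ^{d×d} by H(w) = (1/‖w‖)·(I − wwᵀ/(2‖w‖²)). Then there is no three-times continuously differentiable function Q : ℝ^d∖{0} → ℝ whose Hessian satisfies ∇²Q(w) = H(w) for all w ≠ 0. -/
/-!
If `∇²Q = H` for a `C³` function `Q`, the third derivatives of `Q` commute, so `∂ₖ Hᵢⱼ` must be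
symmetric in `i` and `k`. It is not: at `w = e₁`, restricting to lines gives `∂₁ H₀₀ = -1`
(where `H₀₀ = 1 / |1 + t|` along `(1 + t) e₁`) but `∂₀ H₁₀ = -1/2`.
-/

open Filter Topology EuclideanSpace

section MixedPartials

variable {E F : Type*} [NormedAddCommGroup E] [NormedSpace ℝ E]
  [NormedAddCommGroup F] [NormedSpace ℝ F] {x u v : E} {A B : E → F} {a b : F}

theorem HasLineDerivAt.eq_fderiv_fderiv {g : E → F} (hg : DifferentiableAt ℝ (fderiv ℝ g) x)
    (hA : ∀ᶠ y in 𝓝 x, fderiv ℝ g y u = A y) (ha : HasLineDerivAt ℝ A a x v) :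
    a = fderiv ℝ (fderiv ℝ g) x v u := by
  have hD : HasFDerivAt (fun y => fderiv ℝ g y u)
      ((ContinuousLinearMap.apply ℝ F u).comp (fderiv ℝ (fderiv ℝ g) x)) x :=
    (ContinuousLinearMap.apply ℝ F u).hasFDerivAt.comp x hg.hasFDerivAt
  exact ha.unique ((hD.congr_of_eventuallyEq (hA.mono fun _ h => h.symm)).hasLineDerivAt v)

theorem eq_of_hasLineDerivAt_of_contDiffAt_two {g : E → F} (hg : ContDiffAt ℝ 2 g x)
    (hA : ∀ᶠ y in 𝓝 x, fderiv ℝ g y u = A y) (hB : ∀ᶠ y in 𝓝 x, fderiv ℝ g y v = B y)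
    (ha : HasLineDerivAt ℝ A a x v) (hb : HasLineDerivAt ℝ B b x u) : a = b := by
  have hg' : DifferentiableAt ℝ (fderiv ℝ g) x :=
    (hg.fderiv_right (m := 1) le_rfl).differentiableAt one_ne_zero
  rw [ha.eq_fderiv_fderiv hg' hA, hb.eq_fderiv_fderiv hg' hB]
  exact hg.isSymmSndFDerivAt (by simp [minSmoothness_of_isRCLikeNormedField]) v u

theorem eq_of_hasLineDerivAt_of_contDiffAt_three {Q : E → F} {w : E} (hQ : ContDiffAt ℝ 3 Q x)
    (hA : ∀ᶠ y in 𝓝 x, fderiv ℝ (fderiv ℝ Q) y u w = A y)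
    (hB : ∀ᶠ y in 𝓝 x, fderiv ℝ (fderiv ℝ Q) y v w = B y)
    (ha : HasLineDerivAt ℝ A a x v) (hb : HasLineDerivAt ℝ B b x u) : a = b := by
  have hfderiv_apply : ∀ᶠ y in 𝓝 x, ∀ z,
      fderiv ℝ (fun y => fderiv ℝ Q y w) y z = fderiv ℝ (fderiv ℝ Q) y z w := by
    filter_upwards [hQ.eventually (by simp)] with y hy z
    rw [fderiv_clm_apply ((hy.fderiv_right (m := 2) le_rfl).differentiableAt (by simp))
      (differentiableAt_const w)]
    simp
  refine eq_of_hasLineDerivAt_of_contDiffAt_two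
    ((hQ.fderiv_right (m := 2) le_rfl).clm_apply (contDiffAt_const (c := w))) ?_ ?_ ha hb
  · filter_upwards [hfderiv_apply, hA] with y hy hy' using (hy u).trans hy'
  · filter_upwards [hfderiv_apply, hB] with y hy hy' using (hy v).trans hy'

end MixedPartials

section HessianField

variable {d : ℕ} {i j : Fin d}

noncomputable def hessianField (i j : Fin d) (w : EuclideanSpace ℝ (Fin d)) : ℝ :=
  1 / ‖w‖ * ((if i = j then (1 : ℝ) else 0) - w i * w j / (2 * ‖w‖ ^ 2))

theorem hasLineDerivAt_hessianField_diag (hij : i ≠ j) :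
    HasLineDerivAt ℝ (hessianField i i) (-1) (single j 1) (single j 1) := by
  have hline : ∀ t : ℝ, hessianField i i (single j 1 + t • single j 1) = |1 + t|⁻¹ := by
    intro t
    rw [show single j 1 + t • single j 1 = (1 + t) • single j (1 : ℝ) by module]
    simp [hessianField, norm_smul, hij]
  have hinv : HasDerivAt (fun t : ℝ => (1 + t)⁻¹) (-1) 0 := by
    simpa using ((hasDerivAt_id (0 : ℝ)).const_add 1).fun_inv (by norm_num)
  refine HasDerivAt.congr_of_eventuallyEq hinv ?_
  filter_upwards [Ioi_mem_nhds (show (-1 : ℝ) < 0 by norm_num)] with t ht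
  rw [hline, abs_of_pos (by simp at ht; linarith)]

theorem norm_single_add_smul_single (hij : i ≠ j) (t : ℝ) :
    ‖single j (1 : ℝ) + t • single i 1‖ = √(1 + t ^ 2) := by
  have horth : inner ℝ (single j (1 : ℝ)) (t • single i 1) = 0 := by
    simp [EuclideanSpace.inner_single_left, hij]
  rw [← Real.sqrt_sq (norm_nonneg _), norm_add_sq_real, horth, norm_smul]
  simp

theorem hasLineDerivAt_hessianField_offDiag (hij : i ≠ j) :
    HasLineDerivAt ℝ (hessianField j i) (-1 / 2) (single j 1) (single i 1) := by
  have hline : (fun t : ℝ => hessianField j i (single j 1 + t • single i 1))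
      = fun t => (√(1 + t ^ 2))⁻¹ * -(t / (2 * (1 + t ^ 2))) := by
    funext t
    rw [hessianField, norm_single_add_smul_single hij, Real.sq_sqrt (by positivity)]
    simp [hij.symm, hij]
  have hfac : DifferentiableAt ℝ (fun t : ℝ => (√(1 + t ^ 2))⁻¹) 0 := by
    fun_prop (disch := norm_num)
  have hlin : HasDerivAt (fun t : ℝ => -(t / (2 * (1 + t ^ 2)))) (-1 / 2) 0 := by
    have hden := (((hasDerivAt_id (0 : ℝ)).fun_pow 2).const_add 1).const_mul 2
    exact ((hasDerivAt_id 0).fun_div hden (by norm_num)).fun_neg.congr_deriv (by norm_num)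
  unfold HasLineDerivAt
  rw [hline]
  exact (hfac.hasDerivAt.fun_mul hlin).congr_deriv (by norm_num)

end HessianField

/-- for `d ≥ 2`, the matrix field
`H(w) = (1/‖w‖)(I − wwᵀ/(2‖w‖²))` on `ℝ^d ∖ {0}` is not the Hessian of any
three-times continuously differentiable function `Q` on `ℝ^d ∖ {0}`. -/
theorem stmt_7 {d : ℕ} (hd : 2 ≤ d) :
    ¬ ∃ Q : EuclideanSpace ℝ (Fin d) → ℝ,
      ContDiffOn ℝ 3 Q {w : EuclideanSpace ℝ (Fin d) | w ≠ 0} ∧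
      ∀ w : EuclideanSpace ℝ (Fin d), w ≠ 0 → ∀ i j : Fin d,
        iteratedFDerivWithin ℝ 2 Q {w : EuclideanSpace ℝ (Fin d) | w ≠ 0} w
            ![EuclideanSpace.single i (1 : ℝ), EuclideanSpace.single j (1 : ℝ)] =
          1 / ‖w‖ * ((if i = j then (1 : ℝ) else 0) - w i * w j / (2 * ‖w‖ ^ 2)) := by
  rintro ⟨Q, hQ, hH⟩
  let i : Fin d := ⟨0, by omega⟩
  let j : Fin d := ⟨1, by omega⟩
  have hij : i ≠ j := by simp [i, j, Fin.ext_iff]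
  have hHess : ∀ w ≠ 0, ∀ k l : Fin d,
      fderiv ℝ (fderiv ℝ Q) w (single k 1) (single l 1) = hessianField k l w := by
    intro w hw k l
    have h := hH w hw k l
    rwa [iteratedFDerivWithin_of_isOpen 2 isOpen_ne hw, iteratedFDeriv_two_apply] at h
  have hnear : ∀ᶠ y in 𝓝 (single j (1 : ℝ)), y ≠ 0 := isOpen_ne.mem_nhds (by simp)
  have hsymm := eq_of_hasLineDerivAt_of_contDiffAt_three (hQ.contDiffAt hnear)
    (hnear.mono fun y hy => hHess y hy i i) (hnear.mono fun y hy => hHess y hy j i)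
    (hasLineDerivAt_hessianField_diag hij) (hasLineDerivAt_hessianField_offDiag hij)
  norm_num at hsymm
end
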